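/- arXiv:1811.00475 — 3 statements merged into one kernel-verified Lean document; each statement's English description precedes it below -/
import Mathlib

section
/- For positive reals x_1,...,x_n in (0,1/2] with positive weights summing to 1, the Ky Fan inequality holds: A'_n/G'_n ≤ A_n/G_n, where A, G denote the weighted arithmetic and geometric means and primes denote the means of 1 - x_i. Moreover equality holds if and only if x_1 = ... = x_n. -/
open Real Finset

/-!
With `logit t = log t - log (1 - t)`, taking logarithms turns the claim into
`log (A / G) - log (A' / G') = logit A - ∑ μᵢ logit xᵢ ≥ 0`, which is Jensen's inequality
for `logit`: it is strictly concave on `(0, 1/2]`, its derivative `1 / (t (1 - t))` being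
strictly decreasing there. The equality case of Jensen's inequality gives the equality case.
-/

noncomputable def logit (t : ℝ) : ℝ := log t - log (1 - t)

lemma hasDerivAt_logit {t : ℝ} (h0 : 0 < t) (h1 : t < 1) :
    HasDerivAt logit (t * (1 - t))⁻¹ t := by
  have h1' : 1 - t ≠ 0 := by linarith
  refine ((hasDerivAt_log h0.ne').sub
    ((hasDerivAt_log h1').comp t ((hasDerivAt_id t).const_sub 1))).congr_deriv ?_
  field_simp
  ring

lemma strictConcaveOn_logit : StrictConcaveOn ℝ (Set.Ioc 0 (1 / 2)) logit := by
  refine StrictAntiOn.strictConcaveOn_of_deriv (convex_Ioc _ _)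
    (fun t ht => (hasDerivAt_logit ht.1 (by linarith [ht.2])).continuousAt.continuousWithinAt) ?_
  rw [interior_Ioc]
  intro s hs t ht hst
  rw [(hasDerivAt_logit hs.1 (by linarith [hs.2])).deriv,
    (hasDerivAt_logit ht.1 (by linarith [ht.2])).deriv]
  have hpos : 0 < s * (1 - s) := mul_pos hs.1 (by linarith [hs.2])
  exact inv_strictAnti₀ hpos (by nlinarith [ht.2])

section

variable {ι : Type*} [Fintype ι] {μ x : ι → ℝ}

lemma log_prod_rpow (hx : ∀ i, 0 < x i) : log (∏ i, x i ^ μ i) = ∑ i, μ i * log (x i) := by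
  rw [log_prod fun i _ => (rpow_pos_of_pos (hx i) _).ne']
  exact sum_congr rfl fun i _ => log_rpow (hx i) _

lemma sum_mul_mem_Ioo (hμ : ∀ i, 0 ≤ μ i) (hsum : ∑ i, μ i = 1)
    (hx : ∀ i, x i ∈ Set.Ioo (0 : ℝ) 1) :
    ∑ i, μ i * x i ∈ Set.Ioo (0 : ℝ) 1 :=
  (convex_Ioo (0 : ℝ) 1).sum_mem (fun i _ => hμ i) hsum fun i _ => hx i

lemma sum_mul_one_sub (hsum : ∑ i, μ i = 1) :
    ∑ i, μ i * (1 - x i) = 1 - ∑ i, μ i * x i := by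
  simp only [mul_sub, mul_one, sum_sub_distrib, hsum]

noncomputable def amGmRatio (μ x : ι → ℝ) : ℝ := (∑ i, μ i * x i) / ∏ i, x i ^ μ i

lemma amGmRatio_pos (hμ : ∀ i, 0 ≤ μ i) (hsum : ∑ i, μ i = 1) (hx : ∀ i, 0 < x i) :
    0 < amGmRatio μ x :=
  div_pos ((convex_Ioi (0 : ℝ)).sum_mem (fun i _ => hμ i) hsum fun i _ => hx i)
    (prod_pos fun i _ => rpow_pos_of_pos (hx i) _)

lemma log_amGmRatio (hA : ∑ i, μ i * x i ≠ 0) (hx : ∀ i, 0 < x i) :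
    log (amGmRatio μ x) = log (∑ i, μ i * x i) - ∑ i, μ i * log (x i) := by
  rw [amGmRatio, log_div hA (prod_pos fun i _ => rpow_pos_of_pos (hx i) _).ne', log_prod_rpow hx]

lemma log_amGmRatio_sub_log_amGmRatio_one_sub (hμ : ∀ i, 0 ≤ μ i) (hsum : ∑ i, μ i = 1)
    (hx : ∀ i, x i ∈ Set.Ioo (0 : ℝ) 1) :
    log (amGmRatio μ x) - log (amGmRatio μ fun i => 1 - x i) =
      logit (∑ i, μ i * x i) - ∑ i, μ i * logit (x i) := by
  have hA := sum_mul_mem_Ioo hμ hsum hx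
  rw [log_amGmRatio hA.1.ne' fun i => (hx i).1,
    log_amGmRatio (by rw [sum_mul_one_sub hsum]; linarith [hA.2]) fun i => by linarith [(hx i).2],
    sum_mul_one_sub hsum]
  simp only [logit, mul_sub, sum_sub_distrib]
  ring

lemma amGmRatio_one_sub_le (hμ : ∀ i, 0 ≤ μ i) (hsum : ∑ i, μ i = 1)
    (hx : ∀ i, x i ∈ Set.Ioc (0 : ℝ) (1 / 2)) :
    amGmRatio μ (fun i => 1 - x i) ≤ amGmRatio μ x := by
  have hx' (i : ι) : x i ∈ Set.Ioo (0 : ℝ) 1 := Set.Ioc_subset_Ioo_right (by norm_num) (hx i)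
  rw [← log_le_log_iff (amGmRatio_pos hμ hsum fun i => sub_pos.2 (hx' i).2)
    (amGmRatio_pos hμ hsum fun i => (hx i).1), ← sub_nonneg,
    log_amGmRatio_sub_log_amGmRatio_one_sub hμ hsum hx', sub_nonneg]
  simpa only [smul_eq_mul] using
    strictConcaveOn_logit.concaveOn.le_map_sum (fun i _ => hμ i) hsum fun i _ => hx i

lemma amGmRatio_one_sub_eq_iff (hμ : ∀ i, 0 < μ i) (hsum : ∑ i, μ i = 1)
    (hx : ∀ i, x i ∈ Set.Ioc (0 : ℝ) (1 / 2)) :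
    amGmRatio μ (fun i => 1 - x i) = amGmRatio μ x ↔ ∀ i j, x i = x j := by
  have hx' (i : ι) : x i ∈ Set.Ioo (0 : ℝ) 1 := Set.Ioc_subset_Ioo_right (by norm_num) (hx i)
  have hμ' (i : ι) : 0 ≤ μ i := (hμ i).le
  rw [← log_injOn_pos.eq_iff (amGmRatio_pos hμ' hsum fun i => sub_pos.2 (hx' i).2)
    (amGmRatio_pos hμ' hsum fun i => (hx i).1), eq_comm, ← sub_eq_zero,
    log_amGmRatio_sub_log_amGmRatio_one_sub hμ' hsum hx', sub_eq_zero]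
  simpa only [smul_eq_mul, mem_univ, true_implies] using
    strictConcaveOn_logit.map_sum_eq_iff_of_pos (fun i _ => hμ i) hsum fun i _ => hx i

end

/-- The Ky Fan inequality `A'_n/G'_n ≤ A_n/G_n`, with equality iff all `x i` are equal. -/
theorem kyFan_inequality (n : ℕ) (x μ : Fin n → ℝ)
    (hx : ∀ i, x i ∈ Set.Ioc (0:ℝ) (1/2)) (hμ : ∀ i, 0 < μ i)
    (hsum : ∑ i, μ i = 1)
    (A G A' G' : ℝ)
    (hA : A = ∑ i, μ i * x i) (hG : G = ∏ i, x i ^ μ i)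
    (hA' : A' = ∑ i, μ i * (1 - x i)) (hG' : G' = ∏ i, (1 - x i) ^ μ i) :
    A' / G' ≤ A / G ∧ (A' / G' = A / G ↔ ∀ i j, x i = x j) := by
  subst hA hG hA' hG'
  exact ⟨amGmRatio_one_sub_le (fun i => (hμ i).le) hsum hx,
    amGmRatio_one_sub_eq_iff hμ hsum hx⟩
end

section
/- For positive reals x_1,...,x_n in (0,1/2] with weights μ_i ≥ 0 summing to 1, one has 1/G'_n - 1/A'_n ≤ 1/G_n - 1/A_n, where A, G are weighted arithmetic and geometric means and primes denote means of 1 - x_i. -/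
/-!
Write `A' = 1 - A`. The function `z ↦ log (1 - z) - log z` has derivative `-1 / (z (1 - z))`,
which increases on `(0, 1/2]`, so it is convex there; Jensen's inequality for it is the
Ky Fan inequality `G / G' ≤ A / A'`. Combined with `A ≤ A'` and `G' ≤ A'` (AM–GM), it yields
`A A' (G' - G) ≥ G G' (A' - A)`, which is the claim after clearing denominators.
-/

open Real Finset

lemma hasDerivAt_log_one_sub_sub_log {z : ℝ} (hz₀ : 0 < z) (hz₁ : z < 1) :
    HasDerivAt (fun z => log (1 - z) - log z) (-(z * (1 - z))⁻¹) z := by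
  have h_one_sub : HasDerivAt (fun z : ℝ => log (1 - z)) (-(1 - z)⁻¹) z := by
    simpa [div_eq_mul_inv] using ((hasDerivAt_id z).const_sub 1).log (sub_pos.2 hz₁).ne'
  refine (h_one_sub.sub (hasDerivAt_log hz₀.ne')).congr_deriv ?_
  field_simp [(sub_pos.2 hz₁).ne']
  ring

lemma convexOn_log_one_sub_sub_log :
    ConvexOn ℝ (Set.Ioc 0 (1 / 2)) (fun z => log (1 - z) - log z) := by
  have h_deriv : ∀ z ∈ Set.Ioc (0 : ℝ) (1 / 2),
      HasDerivAt (fun z => log (1 - z) - log z) (-(z * (1 - z))⁻¹) z :=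
    fun z hz => hasDerivAt_log_one_sub_sub_log hz.1 (by linarith [hz.2])
  have h_int : interior (Set.Ioc (0 : ℝ) (1 / 2)) ⊆ Set.Ioc 0 (1 / 2) := interior_subset
  refine MonotoneOn.convexOn_of_deriv (convex_Ioc _ _)
    (fun z hz => (h_deriv z hz).continuousAt.continuousWithinAt)
    (fun z hz => (h_deriv z (h_int hz)).differentiableAt.differentiableWithinAt) ?_
  intro a ha b hb hab
  rw [(h_deriv a (h_int ha)).deriv, (h_deriv b (h_int hb)).deriv, neg_le_neg_iff]
  have ha₀ := (h_int ha).1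
  have hb₂ := (h_int hb).2
  exact inv_anti₀ (by nlinarith) (by nlinarith)

lemma log_prod_rpow_s3 {ι : Type*} {s : Finset ι} {w p : ι → ℝ} (hp : ∀ i ∈ s, 0 < p i) :
    log (∏ i ∈ s, p i ^ w i) = ∑ i ∈ s, w i * log (p i) := by
  rw [log_prod fun i hi => (rpow_pos_of_pos (hp i hi) _).ne']
  exact sum_congr rfl fun i hi => log_rpow (hp i hi) _

lemma prod_rpow_pos {ι : Type*} {s : Finset ι} {w p : ι → ℝ} (hp : ∀ i ∈ s, 0 < p i) :
    0 < ∏ i ∈ s, p i ^ w i :=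
  prod_pos fun i hi => rpow_pos_of_pos (hp i hi) _

theorem kyFan_weighted {ι : Type*} {s : Finset ι} {w p : ι → ℝ} (hw : ∀ i ∈ s, 0 ≤ w i)
    (hw₁ : ∑ i ∈ s, w i = 1) (hp : ∀ i ∈ s, p i ∈ Set.Ioc 0 (1 / 2)) :
    (∑ i ∈ s, w i * (1 - p i)) * ∏ i ∈ s, p i ^ w i
      ≤ (∑ i ∈ s, w i * p i) * ∏ i ∈ s, (1 - p i) ^ w i := by
  have hp₀ : ∀ i ∈ s, 0 < p i := fun i hi => (hp i hi).1
  have hq₀ : ∀ i ∈ s, 0 < 1 - p i := fun i hi => by linarith [(hp i hi).2]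
  have h_one_sub : ∑ i ∈ s, w i * (1 - p i) = 1 - ∑ i ∈ s, w i * p i := by
    simp only [mul_sub, mul_one, sum_sub_distrib, hw₁]
  have hA : 0 < ∑ i ∈ s, w i * p i := (prod_rpow_pos hp₀).trans_le
    (geom_mean_le_arith_mean_weighted s w p hw hw₁ fun i hi => (hp₀ i hi).le)
  have hA' : 0 < ∑ i ∈ s, w i * (1 - p i) := (prod_rpow_pos hq₀).trans_le
    (geom_mean_le_arith_mean_weighted s w _ hw hw₁ fun i hi => (hq₀ i hi).le)
  have h_jensen := convexOn_log_one_sub_sub_log.map_sum_le hw hw₁ hp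
  simp only [smul_eq_mul, mul_sub, sum_sub_distrib] at h_jensen
  rw [← log_le_log_iff (mul_pos hA' (prod_rpow_pos hp₀)) (mul_pos hA (prod_rpow_pos hq₀)),
    log_mul hA'.ne' (prod_rpow_pos hp₀).ne', log_mul hA.ne' (prod_rpow_pos hq₀).ne',
    log_prod_rpow_s3 hp₀, log_prod_rpow_s3 hq₀, h_one_sub]
  linarith

lemma one_div_sub_one_div_le_of_mul_le_mul {a g a' g' : ℝ} (ha : 0 < a) (hg : 0 < g)
    (hg' : 0 < g') (hg'a' : g' ≤ a') (haa' : a ≤ a') (h : a' * g ≤ a * g') :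
    1 / g' - 1 / a' ≤ 1 / g - 1 / a := by
  have ha' : 0 < a' := hg'.trans_le hg'a'
  have h_key : g * g' * (a' - a) ≤ a * a' * (g' - g) := by
    nlinarith [mul_nonneg ha'.le (sub_nonneg.2 h),
      mul_nonneg (mul_nonneg hg.le (sub_nonneg.2 haa')) (sub_nonneg.2 hg'a')]
  rw [div_sub_div _ _ hg'.ne' ha'.ne', div_sub_div _ _ hg.ne' ha.ne',
    div_le_div_iff₀ (by positivity) (by positivity)]
  nlinarith

/-- The reciprocal additive Ky Fan type inequality `1/G'_n - 1/A'_n ≤ 1/G_n - 1/A_n`. -/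
theorem kyFan_reciprocal_geom_arith (n : ℕ) (x μ : Fin n → ℝ)
    (hx : ∀ i, x i ∈ Set.Ioc (0:ℝ) (1/2)) (hμ : ∀ i, 0 ≤ μ i)
    (hsum : ∑ i, μ i = 1)
    (A G A' G' : ℝ)
    (hA : A = ∑ i, μ i * x i) (hG : G = ∏ i, x i ^ μ i)
    (hA' : A' = ∑ i, μ i * (1 - x i)) (hG' : G' = ∏ i, (1 - x i) ^ μ i) :
    1 / G' - 1 / A' ≤ 1 / G - 1 / A := by
  subst hA hG hA' hG'
  have hx₀ : ∀ i ∈ univ, 0 < x i := fun i _ => (hx i).1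
  have hx₁ : ∀ i ∈ univ, 0 < 1 - x i := fun i _ => by linarith [(hx i).2]
  have hG_pos := prod_rpow_pos (w := μ) hx₀
  refine one_div_sub_one_div_le_of_mul_le_mul ?_ hG_pos (prod_rpow_pos hx₁)
    (geom_mean_le_arith_mean_weighted _ μ _ (fun i _ => hμ i) hsum fun i hi => (hx₁ i hi).le)
    ?_ (kyFan_weighted (fun i _ => hμ i) hsum fun i _ => hx i)
  · exact hG_pos.trans_le
      (geom_mean_le_arith_mean_weighted _ μ x (fun i _ => hμ i) hsum fun i hi => (hx₀ i hi).le)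
  · rw [← sub_nonneg, ← sum_sub_distrib]
    exact sum_nonneg fun i _ => by nlinarith [hμ i, (hx i).2]
end

section
/- Let f be an operator monotone function on [0,∞) with values in [0,∞), f(1) = 1, and let σ be the associated operator mean A σ B = A^{1/2} f(A^{-1/2}BA^{-1/2}) A^{1/2} with μ = f'(1). Then for all positive definite matrices A, B: A !_μ B ≤ A σ B ≤ A ∇_μ B in the Löwner order. -/
/-!
Monotonicity of `cfc f` on `2 × 2` positive definite matrices already forces `f` to be concave
on `(0, ∞)`: comparing a matrix with eigenvalues `s < t` and corner entry `y` with `diag (x, m)`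
for large `m` puts the secant of `f` over `[s, t]` below `f` at `x`. Concavity, `f 1 = 1` and
`f' 1 = μ` give the tangent bound `f x ≤ 1 - μ + μ x`. The same bound for the operator monotone
function `x ↦ (f x⁻¹)⁻¹`, which has the same value and derivative at `1`, reads
`(1 - μ + μ x⁻¹)⁻¹ ≤ f x`. Both scalar bounds hold on the spectrum of
`C = A^{-1/2} B A^{-1/2}`, and congruence by `A^{1/2}` turns them into the two matrix inequalities.
-/

open Matrix ComplexOrder

/-- Matrix square root via the real continuous functional calculus. -/
noncomputable def msqrt {n : ℕ} (A : Matrix (Fin n) (Fin n) ℂ) :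
    Matrix (Fin n) (Fin n) ℂ :=
  cfc Real.sqrt A

/-- The Kubo–Ando mean associated to a representing function `f`:
`A σ_f B = A^{1/2} f(A^{-1/2} B A^{-1/2}) A^{1/2}`. -/
noncomputable def opMean {n : ℕ} (f : ℝ → ℝ) (A B : Matrix (Fin n) (Fin n) ℂ) :
    Matrix (Fin n) (Fin n) ℂ :=
  msqrt A * cfc f ((msqrt A)⁻¹ * B * (msqrt A)⁻¹) * msqrt A

/-- A function `f : ℝ → ℝ` is operator monotone on `[0,∞)` if it is monotone for the
Löwner order on positive semidefinite matrices of every size. -/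
def OperatorMonotone (f : ℝ → ℝ) : Prop :=
  ∀ (n : ℕ) (A B : Matrix (Fin n) (Fin n) ℂ), A.PosSemidef → B.PosSemidef →
    (B - A).PosSemidef → (cfc f B - cfc f A).PosSemidef

open scoped MatrixOrder Topology

section

variable {ι : Type*} [Fintype ι] [DecidableEq ι]

section
open scoped Matrix.Norms.L2Operator

theorem Matrix.PosDef.inv_le_inv_of_le {A B : Matrix ι ι ℂ} (hA : A.PosDef) (hB : B.PosDef)
    (h : A ≤ B) : B⁻¹ ≤ A⁻¹ := by
  lift A to (Matrix ι ι ℂ)ˣ using hA.isUnit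
  lift B to (Matrix ι ι ℂ)ˣ using hB.isUnit
  simpa only [Matrix.coe_units_inv] using CStarAlgebra.inv_le_inv hA.posSemidef.nonneg h

end

theorem Matrix.IsHermitian.posDef_iff_spectrum_pos {M : Matrix ι ι ℂ} (hM : M.IsHermitian) :
    M.PosDef ↔ ∀ x ∈ spectrum ℝ M, 0 < x :=
  isStrictlyPositive_iff_posDef.symm.trans
    (StarOrderedRing.isStrictlyPositive_iff_spectrum_pos M hM.isSelfAdjoint)

theorem Matrix.PosDef.posDef_cfc {M : Matrix ι ι ℂ} (hM : M.PosDef) {g : ℝ → ℝ}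
    (hg : ∀ x > 0, 0 < g x) : (cfc g M).PosDef := by
  have hH : (cfc g M).IsHermitian := Matrix.isHermitian_iff_isSelfAdjoint.mpr (cfc_predicate g M)
  refine hH.posDef_iff_spectrum_pos.mpr ?_
  rw [cfc_map_spectrum g M (hf := M.finite_real_spectrum.continuousOn g)]
  rintro _ ⟨x, hx, rfl⟩
  exact hg x (hM.isHermitian.posDef_iff_spectrum_pos.mp hM x hx)

theorem Matrix.PosDef.cfc_inv_comp_inv {M : Matrix ι ι ℂ} (hM : M.PosDef) {g : ℝ → ℝ}
    (hg : ∀ x > 0, 0 < g x) : cfc (fun x => (g x⁻¹)⁻¹) M = (cfc g M⁻¹)⁻¹ := by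
  have hspec := hM.isHermitian.posDef_iff_spectrum_pos.mp hM
  rw [cfc_inv (fun x => g x⁻¹) M (fun x hx => (hg _ (inv_pos.mpr (hspec x hx))).ne')
    (M.finite_real_spectrum.continuousOn _), Matrix.nonsing_inv_eq_ringInverse]
  lift M to (Matrix ι ι ℂ)ˣ using hM.isUnit
  rw [cfc_comp_inv g M ((M.val.finite_real_spectrum.image _).continuousOn g),
    Matrix.coe_units_inv]

theorem Matrix.PosDef.inv_mul_mul_inv {S B : Matrix ι ι ℂ} (hS : S.PosDef) (hB : B.PosDef) :
    (S⁻¹ * B * S⁻¹).PosDef := by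
  have h := (Matrix.IsUnit.posDef_star_left_conjugate_iff (x := B) hS.inv.isUnit).mpr hB
  rwa [Matrix.star_eq_conjTranspose, hS.inv.isHermitian.eq] at h

theorem conj_cfc_le_conj_cfc {S C : Matrix ι ι ℂ} (hS : S.IsHermitian) {g h : ℝ → ℝ}
    (hgh : ∀ x ∈ spectrum ℝ C, g x ≤ h x) : S * cfc g C * S ≤ S * cfc h C * S :=
  IsSelfAdjoint.conjugate_le_conjugate (cfc_mono hgh (C.finite_real_spectrum.continuousOn g)
    (C.finite_real_spectrum.continuousOn h)) hS.isSelfAdjoint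

theorem conj_cfc_affine {S B : Matrix ι ι ℂ} (hS : S.PosDef) (hB : B.PosDef) (μ : ℝ) :
    S * cfc (fun x => (1 - μ) + μ * x) (S⁻¹ * B * S⁻¹) * S
      = (1 - μ) • (S * S) + μ • B := by
  have hSdet : IsUnit S.det := (Matrix.isUnit_iff_isUnit_det S).mp hS.isUnit
  have hCsa := (hS.inv_mul_mul_inv hB).isHermitian.isSelfAdjoint
  rw [cfc_const_add _ _ _ (by fun_prop) hCsa, cfc_const_mul _ _ _ (by fun_prop),
    cfc_id' ℝ _ hCsa, Algebra.algebraMap_eq_smul_one]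
  simp only [Matrix.mul_add, Matrix.add_mul, Matrix.mul_smul, Matrix.smul_mul, Matrix.mul_one,
    ← Matrix.mul_assoc, Matrix.mul_nonsing_inv _ hSdet, Matrix.one_mul,
    Matrix.nonsing_inv_mul_cancel_right (h := hSdet)]

theorem conj_cfc_harmonic {S B : Matrix ι ι ℂ} (hS : S.PosDef) (hB : B.PosDef) (μ : ℝ)
    (hden : ∀ x > 0, (1 - μ) + μ * x⁻¹ ≠ 0) :
    S * cfc (fun x => ((1 - μ) + μ * x⁻¹)⁻¹) (S⁻¹ * B * S⁻¹) * S
      = ((1 - μ) • (S * S)⁻¹ + μ • B⁻¹)⁻¹ := by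
  have hSdet : IsUnit S.det := (Matrix.isUnit_iff_isUnit_det S).mp hS.isUnit
  have hC := hS.inv_mul_mul_inv hB
  have hCsa := hC.isHermitian.isSelfAdjoint
  have hspec := hC.isHermitian.posDef_iff_spectrum_pos.mp hC
  have hCinv : (S⁻¹ * B * S⁻¹)⁻¹ = S * B⁻¹ * S := by
    rw [Matrix.mul_inv_rev, Matrix.mul_inv_rev, Matrix.nonsing_inv_nonsing_inv S hSdet,
      Matrix.mul_assoc]
  have hmean : (1 - μ) • (S * S)⁻¹ + μ • B⁻¹
      = S⁻¹ * ((1 - μ) • 1 + μ • (S⁻¹ * B * S⁻¹)⁻¹) * S⁻¹ := by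
    simp only [hCinv, Matrix.mul_inv_rev, Matrix.mul_add, Matrix.add_mul, Matrix.mul_smul,
      Matrix.smul_mul, Matrix.mul_one, ← Matrix.mul_assoc, Matrix.nonsing_inv_mul _ hSdet,
      Matrix.one_mul, Matrix.mul_nonsing_inv_cancel_right (h := hSdet)]
  have hcont (g : ℝ → ℝ) : ContinuousOn g (spectrum ℝ (S⁻¹ * B * S⁻¹)) :=
    (S⁻¹ * B * S⁻¹).finite_real_spectrum.continuousOn g
  rw [cfc_inv _ _ (fun x hx => hden x (hspec x hx)) (hcont _) hCsa,
    ← Matrix.nonsing_inv_eq_ringInverse, cfc_const_add _ _ _ (hcont _) hCsa,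
    cfc_const_mul _ _ _ (hcont _), cfc_ringInverse_id _ hC.isUnit hCsa,
    ← Matrix.nonsing_inv_eq_ringInverse, Algebra.algebraMap_eq_smul_one, hmean]
  simp only [Matrix.mul_inv_rev, Matrix.nonsing_inv_nonsing_inv S hSdet, Matrix.mul_assoc]

end

theorem cfc_eq_algebraMap_add_slope_smul {A : Type*} [Ring A] [StarRing A] [Algebra ℝ A]
    [TopologicalSpace A] [ContinuousFunctionalCalculus ℝ A IsSelfAdjoint] {a : A}
    (ha : IsSelfAdjoint a) (g : ℝ → ℝ) {s t : ℝ} (hspec : spectrum ℝ a ⊆ {s, t}) :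
    cfc g a = algebraMap ℝ A (g s - slope g s t * s) + slope g s t • a := by
  have hline : cfc g a = cfc (fun x => (g s - slope g s t * s) + slope g s t * x) a := by
    refine cfc_congr fun x hx => ?_
    rcases hspec hx with rfl | rfl
    · ring
    · have hslope := sub_smul_slope g s x
      simp only [smul_eq_mul, vsub_eq_sub] at hslope
      linear_combination -hslope
  rw [hline, cfc_const_add _ _ a, cfc_const_mul _ _ a, cfc_id' ℝ a]

def realSymm2 (a b c : ℝ) : Matrix (Fin 2) (Fin 2) ℂ := !![(a : ℂ), b; b, c]

theorem isHermitian_realSymm2 (a b c : ℝ) : (realSymm2 a b c).IsHermitian := by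
  ext i j
  fin_cases i <;> fin_cases j <;> simp [realSymm2]

theorem realSymm2_sub (a b c a' b' c' : ℝ) :
    realSymm2 a b c - realSymm2 a' b' c' = realSymm2 (a - a') (b - b') (c - c') := by
  ext i j
  fin_cases i <;> fin_cases j <;> simp [realSymm2]

theorem spectrum_realSymm2_subset {a b c s t : ℝ} (htr : a + c = s + t)
    (hdet : a * c - b ^ 2 = s * t) : spectrum ℝ (realSymm2 a b c) ⊆ {s, t} := by
  intro x hx
  rw [spectrum.mem_iff, Matrix.isUnit_iff_isUnit_det, isUnit_iff_ne_zero, not_not] at hx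
  have hchar : (x - s) * (x - t) = 0 := by
    have hx' : (x - a) * (x - c) - b * b = 0 := by
      simp [Matrix.det_fin_two, realSymm2, Matrix.algebraMap_matrix_apply] at hx
      exact_mod_cast hx
    linear_combination hx' + x * htr - hdet
  rcases mul_eq_zero.mp hchar with h | h
  · exact Or.inl (sub_eq_zero.mp h)
  · exact Or.inr (sub_eq_zero.mp h)

theorem cfc_realSymm2_apply_zero_zero (g : ℝ → ℝ) {a b c s t : ℝ}
    (hspec : spectrum ℝ (realSymm2 a b c) ⊆ {s, t}) :
    cfc g (realSymm2 a b c) 0 0 = ((g s + slope g s t * (a - s) : ℝ) : ℂ) := by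
  rw [cfc_eq_algebraMap_add_slope_smul (isHermitian_realSymm2 a b c).isSelfAdjoint g hspec,
    Algebra.algebraMap_eq_smul_one]
  simp [realSymm2]
  ring

def PosDefMonotone (n : ℕ) (g : ℝ → ℝ) : Prop :=
  ∀ ⦃A B : Matrix (Fin n) (Fin n) ℂ⦄, A.PosDef → B.PosDef → A ≤ B →
    cfc g A ≤ cfc g B

theorem PosDefMonotone.secant_le_of_lt {g : ℝ → ℝ} (hg : PosDefMonotone 2 g) {s y x t : ℝ}
    (hs : 0 < s) (hsy : s < y) (hyx : y < x) (hxt : x < t) :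
    g s + slope g s t * (y - s) ≤ g x := by
  set ε := x - y
  have hε : 0 < ε := sub_pos.mpr hyx
  set d := √((y - s) * (t - y))
  have hd : d ^ 2 = (y - s) * (t - y) := Real.sq_sqrt (by nlinarith)
  set m := s + t - y + d ^ 2 / ε
  have hm : 0 < m := by
    have : 0 < s + t - y := by linarith
    positivity
  -- The smaller matrix has eigenvalues `s, t` and corner entry `y`; `m` is chosen so that the
  -- difference is singular, hence positive semidefinite.
  have hspecA : spectrum ℝ (realSymm2 y d (s + t - y)) ⊆ {s, t} :=
    spectrum_realSymm2_subset (by ring) (by rw [hd]; ring)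
  have hspecB : spectrum ℝ (realSymm2 x 0 m) ⊆ {x, m} :=
    spectrum_realSymm2_subset rfl (by ring)
  have hspecBA : spectrum ℝ (realSymm2 ε (-d) (d ^ 2 / ε)) ⊆ {0, ε + d ^ 2 / ε} :=
    spectrum_realSymm2_subset (by ring) (by field_simp; ring)
  have hA : (realSymm2 y d (s + t - y)).PosDef :=
    (isHermitian_realSymm2 _ _ _).posDef_iff_spectrum_pos.mpr fun z hz => by
      rcases hspecA hz with rfl | rfl <;> linarith
  have hB : (realSymm2 x 0 m).PosDef :=
    (isHermitian_realSymm2 _ _ _).posDef_iff_spectrum_pos.mpr fun z hz => by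
      rcases hspecB hz with rfl | rfl <;> linarith
  have hAB : realSymm2 y d (s + t - y) ≤ realSymm2 x 0 m := by
    rw [← sub_nonneg, realSymm2_sub, StarOrderedRing.nonneg_iff_spectrum_nonneg (R := ℝ) _
      (isHermitian_realSymm2 _ _ _).isSelfAdjoint]
    intro z hz
    rcases hspecBA (by convert hz using 3 <;> ring) with rfl | rfl <;> positivity
  have h00 := (Matrix.le_iff.mp (hg hA hB hAB)).diag_nonneg (i := 0)
  rw [Matrix.sub_apply, cfc_realSymm2_apply_zero_zero g hspecB,
    cfc_realSymm2_apply_zero_zero g hspecA, sub_nonneg, Complex.real_le_real] at h00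
  simpa using h00

theorem PosDefMonotone.secant_le {g : ℝ → ℝ} (hg : PosDefMonotone 2 g) {s x t : ℝ}
    (hs : 0 < s) (hsx : s < x) (hxt : x < t) : g s + slope g s t * (x - s) ≤ g x := by
  have hline : Filter.Tendsto (fun y => g s + slope g s t * (y - s)) (𝓝[<] x)
      (𝓝 (g s + slope g s t * (x - s))) :=
    (Continuous.tendsto (by fun_prop) x).mono_left nhdsWithin_le_nhds
  refine le_of_tendsto hline ?_
  filter_upwards [Ioo_mem_nhdsLT hsx] with y hy
  exact hg.secant_le_of_lt hs hy.1 hy.2 hxt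

theorem PosDefMonotone.concaveOn {g : ℝ → ℝ} (hg : PosDefMonotone 2 g) :
    ConcaveOn ℝ (Set.Ioi 0) g := by
  refine concaveOn_of_slope_anti_adjacent (convex_Ioi 0) fun {s x t} hs _ hsx hxt => ?_
  have h := hg.secant_le hs hsx hxt
  rw [slope_def_field, div_mul_eq_mul_div, ← le_sub_iff_add_le', div_le_iff₀ (by linarith)]
    at h
  rw [div_le_div_iff₀ (by linarith) (by linarith)]
  linarith

theorem ConcaveOn.le_add_mul_sub_of_hasDerivAt {S : Set ℝ} {g : ℝ → ℝ} {x y g' : ℝ}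
    (hg : ConcaveOn ℝ S g) (hx : x ∈ S) (hy : y ∈ S) (hd : HasDerivAt g g' x) :
    g y ≤ g x + g' * (y - x) := by
  rcases lt_trichotomy x y with hxy | rfl | hyx
  · have h := hg.slope_le_of_hasDerivAt hx hy hxy hd
    rw [slope_def_field, div_le_iff₀ (sub_pos.mpr hxy)] at h
    linarith
  · simp
  · have h := hg.le_slope_of_hasDerivAt hy hx hyx hd
    rw [slope_def_field, le_div_iff₀ (sub_pos.mpr hyx)] at h
    linarith

theorem ConcaveOn.pos_of_nonneg {g : ℝ → ℝ} (hg : ConcaveOn ℝ (Set.Ioi 0) g)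
    (hnn : ∀ x > 0, 0 ≤ g x) (h1 : 0 < g 1) {x : ℝ} (hx : 0 < x) : 0 < g x := by
  have hcomb := hg.2 (Set.mem_Ioi.mpr one_pos) (Set.mem_Ioi.mpr (pow_pos hx 2))
    (show 0 ≤ x / (1 + x) by positivity) (show 0 ≤ 1 / (1 + x) by positivity)
    (by rw [← add_div, div_eq_one_iff_eq (by positivity), add_comm])
  have hx' : (x / (1 + x)) • (1 : ℝ) + (1 / (1 + x)) • x ^ 2 = x := by
    simp only [smul_eq_mul]
    field_simp
  rw [hx'] at hcomb
  have hgx2 := hnn (x ^ 2) (by positivity)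
  have hpos : 0 < (x / (1 + x)) • g 1 + (1 / (1 + x)) • g (x ^ 2) := by
    simp only [smul_eq_mul]
    positivity
  linarith

theorem HasDerivAt.inv_comp_inv_of_map_one {g : ℝ → ℝ} {μ : ℝ} (hg : HasDerivAt g μ 1)
    (h1 : g 1 = 1) : HasDerivAt (fun x => (g x⁻¹)⁻¹) μ 1 := by
  have hinv : HasDerivAt (fun x : ℝ => x⁻¹) (-1) 1 := by
    simpa using hasDerivAt_inv (one_ne_zero (α := ℝ))
  have hcomp : HasDerivAt (fun x => g x⁻¹) (μ * -1) 1 := by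
    rw [← inv_one] at hg
    exact hg.comp 1 hinv
  simpa [h1] using hcomp.fun_inv (by simp [h1])

theorem OperatorMonotone.posDefMonotone {f : ℝ → ℝ} (hf : OperatorMonotone f) (n : ℕ) :
    PosDefMonotone n f :=
  fun A B hA hB hAB => hf n A B hA.posSemidef hB.posSemidef hAB

theorem PosDefMonotone.inv_comp_inv {n : ℕ} {g : ℝ → ℝ} (hg : PosDefMonotone n g)
    (hpos : ∀ x > 0, 0 < g x) : PosDefMonotone n (fun x => (g x⁻¹)⁻¹) := by
  intro A B hA hB hAB
  rw [hA.cfc_inv_comp_inv hpos, hB.cfc_inv_comp_inv hpos]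
  exact Matrix.PosDef.inv_le_inv_of_le (hB.inv.posDef_cfc hpos) (hA.inv.posDef_cfc hpos)
    (hg hB.inv hA.inv (hA.inv_le_inv_of_le hB hAB))

theorem OperatorMonotone.concaveOn {f : ℝ → ℝ} (hf : OperatorMonotone f) :
    ConcaveOn ℝ (Set.Ioi 0) f :=
  (hf.posDefMonotone 2).concaveOn

theorem OperatorMonotone.pos {f : ℝ → ℝ} (hf : OperatorMonotone f)
    (hnn : ∀ t ≥ (0 : ℝ), 0 ≤ f t) (hf1 : f 1 = 1) {x : ℝ} (hx : 0 < x) : 0 < f x :=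
  hf.concaveOn.pos_of_nonneg (fun y hy => hnn y hy.le) (by rw [hf1]; exact one_pos) hx

theorem OperatorMonotone.le_one_sub_add_mul {f : ℝ → ℝ} {μ : ℝ} (hf : OperatorMonotone f)
    (hf1 : f 1 = 1) (hder : HasDerivAt f μ 1) {x : ℝ} (hx : 0 < x) :
    f x ≤ (1 - μ) + μ * x := by
  have h := hf.concaveOn.le_add_mul_sub_of_hasDerivAt (Set.mem_Ioi.mpr one_pos) hx hder
  linarith

theorem OperatorMonotone.inv_le_one_sub_add_mul_inv {f : ℝ → ℝ} {μ : ℝ}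
    (hf : OperatorMonotone f) (hnn : ∀ t ≥ (0 : ℝ), 0 ≤ f t) (hf1 : f 1 = 1)
    (hder : HasDerivAt f μ 1) {x : ℝ} (hx : 0 < x) : (f x)⁻¹ ≤ (1 - μ) + μ * x⁻¹ := by
  have hdual := ((hf.posDefMonotone 2).inv_comp_inv fun _ hy => hf.pos hnn hf1 hy).concaveOn
  have h := hdual.le_add_mul_sub_of_hasDerivAt (Set.mem_Ioi.mpr one_pos)
    (Set.mem_Ioi.mpr (inv_pos.mpr hx)) (hder.inv_comp_inv_of_map_one hf1)
  simp only [inv_inv, inv_one, hf1] at h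
  linarith

theorem OperatorMonotone.one_sub_add_mul_inv_pos {f : ℝ → ℝ} {μ : ℝ}
    (hf : OperatorMonotone f) (hnn : ∀ t ≥ (0 : ℝ), 0 ≤ f t) (hf1 : f 1 = 1)
    (hder : HasDerivAt f μ 1) {x : ℝ} (hx : 0 < x) : 0 < (1 - μ) + μ * x⁻¹ :=
  (inv_pos.mpr (hf.pos hnn hf1 hx)).trans_le (hf.inv_le_one_sub_add_mul_inv hnn hf1 hder hx)

theorem OperatorMonotone.inv_one_sub_add_mul_inv_le {f : ℝ → ℝ} {μ : ℝ}
    (hf : OperatorMonotone f) (hnn : ∀ t ≥ (0 : ℝ), 0 ≤ f t) (hf1 : f 1 = 1)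
    (hder : HasDerivAt f μ 1) {x : ℝ} (hx : 0 < x) : ((1 - μ) + μ * x⁻¹)⁻¹ ≤ f x :=
  (inv_le_comm₀ (hf.one_sub_add_mul_inv_pos hnn hf1 hder hx) (hf.pos hnn hf1 hx)).mpr
    (hf.inv_le_one_sub_add_mul_inv hnn hf1 hder hx)

theorem posDef_msqrt {n : ℕ} {A : Matrix (Fin n) (Fin n) ℂ} (hA : A.PosDef) :
    (msqrt A).PosDef :=
  hA.posDef_cfc fun _ hx => Real.sqrt_pos.mpr hx

theorem msqrt_mul_msqrt {n : ℕ} {A : Matrix (Fin n) (Fin n) ℂ} (hA : A.PosDef) :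
    msqrt A * msqrt A = A := by
  have hspec := hA.isHermitian.posDef_iff_spectrum_pos.mp hA
  rw [msqrt, ← cfc_mul _ _ A (A.finite_real_spectrum.continuousOn _)
    (A.finite_real_spectrum.continuousOn _)]
  exact (cfc_congr fun x hx => Real.mul_self_sqrt (hspec x hx).le).trans (cfc_id' ℝ A)

/-- The arithmetic–mean–harmonic inequality `A!_μB ≤ AσB ≤ A∇_μB` for a Kubo–Ando mean
`σ` with operator monotone representing function `f`, `f(1) = 1`, `μ = f'(1)`. -/
theorem mean_between_harmonic_and_arithmetic (f : ℝ → ℝ) (μ : ℝ)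
    (hmono : OperatorMonotone f) (hnn : ∀ t ≥ (0:ℝ), 0 ≤ f t)
    (hf1 : f 1 = 1) (hder : HasDerivAt f μ 1)
    (n : ℕ) (A B : Matrix (Fin n) (Fin n) ℂ) (hA : A.PosDef) (hB : B.PosDef) :
    (opMean f A B - ((1 - μ) • A⁻¹ + μ • B⁻¹)⁻¹).PosSemidef ∧
    (((1 - μ) • A + μ • B) - opMean f A B).PosSemidef := by
  have hS := posDef_msqrt hA
  have hC := hS.inv_mul_mul_inv hB
  have hspec := hC.isHermitian.posDef_iff_spectrum_pos.mp hC
  constructor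
  · have h := conj_cfc_le_conj_cfc hS.isHermitian fun x hx =>
      hmono.inv_one_sub_add_mul_inv_le hnn hf1 hder (hspec x hx)
    rwa [conj_cfc_harmonic hS hB μ fun x hx =>
      (hmono.one_sub_add_mul_inv_pos hnn hf1 hder hx).ne', msqrt_mul_msqrt hA] at h
  · have h := conj_cfc_le_conj_cfc hS.isHermitian fun x hx =>
      hmono.le_one_sub_add_mul hf1 hder (hspec x hx)
    rwa [conj_cfc_affine hS hB μ, msqrt_mul_msqrt hA] at h
end
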